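/- Let V be the real vector space of polynomials in ℝ[x,y] of total degree at most 8, and let r : V → ℝ be a linear functional satisfying: (i) symmetry: r(x^i y^j) = r(x^j y^i) for all i + j ≤ 8; (ii) the recurrence r(x^i y^j) = r(x^{i−1} y^{j+1}) + r(x^{i−2} y^j) − r(x^{i−1} y^{j−1}) whenever 0 < j < i and i + j ≤ 8; (iii) r(P_i(x) P_j(y)) = 1 if i = j ∈ {0, 3, 4} and r(P_i(x) P_j(y)) = 0 for all other pairs 0 ≤ i, j ≤ 4; and (iv) r(P_i(x) P_j(x)) = r(P_i(y) P_j(y)) = 1 if i = j and = 0 if i ≠ j, for all 0 ≤ i, j ≤ 4 with i + j ≤ 8. Then the values r(x^i y^j) for i + j ≤ 8 are exactly: r(1)=1, r(x²)=1, r(x²y²)=1, r(x³y³)=1, r(x⁴)=2, r(x⁴y²)=2, r(x⁶)=5, r(x⁶y²)=6, r(x⁵y³)=4, r(x⁴y⁴)=5, r(x⁷y)=1, r(x⁸)=14, together with the symmetric values, and r(x^i y^j)=0 for all remaining monomials with i + j ≤ 8. -/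

import Mathlib

/-!
For `a ≤ 4` the power `t ^ a` is a nonnegative integer combination of `P₀, …, P₄` (with ballot
number coefficients). Expanding `x^a y^b` and `x^a x^b` in this basis turns (iii) and (iv) into
the values of `r(x^a y^b)` for `a, b ≤ 4` and of `r(x^n)` for `n ≤ 8` (the Catalan numbers at even
`n`). The recurrence (ii) then determines `r(x^i y^j)` for `i ≥ 5`, `1 ≤ j < i` by strong induction
on `i`, and the symmetry (i) covers `j > i`.
-/

/-- The polynomials `P₀,…,P₄` (with `Ppoly k = 0` for `k > 5`). -/
def Ppoly {R : Type*} [CommRing R] : ℕ → R → R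
  | 0, _ => 1
  | 1, t => t
  | 2, t => t ^ 2 - 1
  | 3, t => t ^ 3 - 2 * t
  | 4, t => t ^ 4 - 3 * t ^ 2 + 1
  | 5, t => t ^ 5 - 4 * t ^ 3 + 3 * t
  | _, _ => 0

/-- The table of values `r(x^i y^j)` for `i + j ≤ 8` from the paper (extended by zero). -/
def tab : ℕ → ℕ → ℝ
  | 0, 0 => 1
  | 2, 0 => 1 | 0, 2 => 1
  | 2, 2 => 1
  | 3, 3 => 1
  | 4, 0 => 2 | 0, 4 => 2
  | 4, 2 => 2 | 2, 4 => 2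
  | 6, 0 => 5 | 0, 6 => 5
  | 6, 2 => 6 | 2, 6 => 6
  | 5, 3 => 4 | 3, 5 => 4
  | 4, 4 => 5
  | 7, 1 => 1 | 1, 7 => 1
  | 8, 0 => 14 | 0, 8 => 14
  | _, _ => 0

/-- The variable `x` of `ℝ[x,y]`. -/
noncomputable def xR : MvPolynomial (Fin 2) ℝ := MvPolynomial.X 0
/-- The variable `y` of `ℝ[x,y]`. -/
noncomputable def yR : MvPolynomial (Fin 2) ℝ := MvPolynomial.X 1

/-- The monomial `x^i y^j` in `ℝ[x,y]`. -/
noncomputable def mono (i j : ℕ) : MvPolynomial (Fin 2) ℝ := xR ^ i * yR ^ j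

open Finset

def powPpolyCoeff : ℕ → ℕ → ℕ
  | 0, 0 => 1
  | 1, 1 => 1
  | 2, 0 => 1 | 2, 2 => 1
  | 3, 1 => 2 | 3, 3 => 1
  | 4, 0 => 2 | 4, 2 => 3 | 4, 4 => 1
  | _, _ => 0

theorem pow_eq_sum_Ppoly {R : Type*} [CommRing R] {a : ℕ} (ha : a ≤ 4) (t : R) :
    t ^ a = ∑ k ∈ range 5, powPpolyCoeff a k • Ppoly k t := by
  interval_cases a <;> simp [sum_range_succ, powPpolyCoeff, Ppoly]
  ring

theorem map_pow_mul_pow_eq_sum {A M F : Type*} [CommRing A] [AddCommMonoid M] [FunLike F A M]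
    [AddMonoidHomClass F A M] (f : F) {a b : ℕ} (ha : a ≤ 4) (hb : b ≤ 4) (s t : A) :
    f (s ^ a * t ^ b) = ∑ k ∈ range 5, ∑ l ∈ range 5,
      (powPpolyCoeff a k * powPpolyCoeff b l) • f (Ppoly k s * Ppoly l t) := by
  simp only [pow_eq_sum_Ppoly ha, pow_eq_sum_Ppoly hb, sum_mul_sum, map_sum, smul_mul_smul_comm,
    map_nsmul]

theorem tab_symm {i j : ℕ} (hij : i + j ≤ 8) : tab i j = tab j i := by
  have hi : i ≤ 8 := by omega
  have hj : j ≤ 8 := by omega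
  interval_cases i <;> interval_cases j <;> rfl

theorem tab_recurrence {i j : ℕ} (hj : 0 < j) (hji : j < i) (hij : i + j ≤ 8) :
    tab i j = tab (i - 1) (j + 1) + tab (i - 2) j - tab (i - 1) (j - 1) := by
  have hi : i ≤ 8 := by omega
  interval_cases i <;> interval_cases j <;> first | omega | norm_num [tab]

section

variable (r : MvPolynomial (Fin 2) ℝ →ₗ[ℝ] ℝ)

theorem map_mono_eq_tab_of_le_four
    (hPxy : ∀ i j : ℕ, i ≤ 4 → j ≤ 4 →
      r (Ppoly i xR * Ppoly j yR) = if i = j ∧ (i = 0 ∨ i = 3 ∨ i = 4) then 1 else 0)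
    {a b : ℕ} (ha : a ≤ 4) (hb : b ≤ 4) : r (mono a b) = tab a b := by
  rw [mono, map_pow_mul_pow_eq_sum r ha hb]
  simp (disch := norm_num) only [sum_range_succ, sum_range_zero, hPxy]
  interval_cases a <;> interval_cases b <;> norm_num [powPpolyCoeff, tab]

theorem map_mono_zero_eq_tab
    (hPxx : ∀ i j : ℕ, i ≤ 4 → j ≤ 4 →
      r (Ppoly i xR * Ppoly j xR) = if i = j then 1 else 0)
    {n : ℕ} (hn : n ≤ 8) : r (mono n 0) = tab n 0 := by
  obtain ⟨a, b, ha, hb, rfl⟩ : ∃ a b, a ≤ 4 ∧ b ≤ 4 ∧ n = a + b :=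
    ⟨min n 4, n - min n 4, min_le_right _ _, by omega, by omega⟩
  rw [mono, pow_zero, mul_one, pow_add, map_pow_mul_pow_eq_sum r ha hb]
  simp (disch := norm_num) only [sum_range_succ, sum_range_zero, hPxx]
  interval_cases a <;> interval_cases b <;> norm_num [powPpolyCoeff, tab]

theorem map_mono_eq_tab_of_le
    (hrec : ∀ i j : ℕ, 0 < j → j < i → i + j ≤ 8 →
      r (mono i j) = r (mono (i - 1) (j + 1)) + r (mono (i - 2) j) - r (mono (i - 1) (j - 1)))
    (hPxy : ∀ i j : ℕ, i ≤ 4 → j ≤ 4 →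
      r (Ppoly i xR * Ppoly j yR) = if i = j ∧ (i = 0 ∨ i = 3 ∨ i = 4) then 1 else 0)
    (hPxx : ∀ i j : ℕ, i ≤ 4 → j ≤ 4 →
      r (Ppoly i xR * Ppoly j xR) = if i = j then 1 else 0)
    {i j : ℕ} (hji : j ≤ i) (hij : i + j ≤ 8) : r (mono i j) = tab i j := by
  induction i using Nat.strong_induction_on generalizing j with
  | _ i ih =>
    rcases Nat.eq_zero_or_pos j with rfl | hj
    · exact map_mono_zero_eq_tab r hPxx (by omega)
    rcases le_or_gt i 4 with hi | hi
    · exact map_mono_eq_tab_of_le_four r hPxy hi (by omega)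
    rw [hrec i j hj (by omega) hij, tab_recurrence hj (by omega) hij,
      ih (i - 1) (by omega) (by omega) (by omega), ih (i - 2) (by omega) (by omega) (by omega),
      ih (i - 1) (by omega) (by omega) (by omega)]

end

theorem residue_table_determined_general
    (r : MvPolynomial (Fin 2) ℝ →ₗ[ℝ] ℝ)
    (hsymm : ∀ i j : ℕ, i + j ≤ 8 → r (mono i j) = r (mono j i))
    (hrec : ∀ i j : ℕ, 0 < j → j < i → i + j ≤ 8 →
      r (mono i j) = r (mono (i - 1) (j + 1)) + r (mono (i - 2) j) - r (mono (i - 1) (j - 1)))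
    (hPxy : ∀ i j : ℕ, i ≤ 4 → j ≤ 4 →
      r (Ppoly i xR * Ppoly j yR) = if i = j ∧ (i = 0 ∨ i = 3 ∨ i = 4) then 1 else 0)
    (hPxx : ∀ i j : ℕ, i ≤ 4 → j ≤ 4 →
      r (Ppoly i xR * Ppoly j xR) = if i = j then 1 else 0) :
    ∀ i j : ℕ, i + j ≤ 8 → r (mono i j) = tab i j := by
  intro i j hij
  rcases le_total j i with hji | hij'
  · exact map_mono_eq_tab_of_le r hrec hPxy hPxx hji hij
  · rw [hsymm i j hij, tab_symm hij, map_mono_eq_tab_of_le r hrec hPxy hPxx hij' (by omega)]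

/-- A linear functional `r` on `ℝ[x,y]` satisfying (i) the symmetry `r(x^i y^j) = r(x^j y^i)`,
(ii) the recurrence `r(x^i y^j) = r(x^{i-1} y^{j+1}) + r(x^{i-2} y^j) - r(x^{i-1} y^{j-1})`
for `0 < j < i`, `i + j ≤ 8`, (iii) `r(P_i(x)P_j(y)) = δ_{ij}` for `i = j ∈ {0,3,4}` and `0`
for all other `i, j ≤ 4`, and (iv) `r(P_i(x)P_j(x)) = r(P_i(y)P_j(y)) = δ_{ij}` for
`i, j ≤ 4`, takes on the monomials `x^i y^j` with `i + j ≤ 8` exactly the values of the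
paper's table. -/
theorem residue_table_determined
    (r : MvPolynomial (Fin 2) ℝ →ₗ[ℝ] ℝ)
    (hsymm : ∀ i j : ℕ, i + j ≤ 8 → r (mono i j) = r (mono j i))
    (hrec : ∀ i j : ℕ, 0 < j → j < i → i + j ≤ 8 →
      r (mono i j) = r (mono (i - 1) (j + 1)) + r (mono (i - 2) j) - r (mono (i - 1) (j - 1)))
    (hPxy : ∀ i j : ℕ, i ≤ 4 → j ≤ 4 →
      r (Ppoly i xR * Ppoly j yR) = if i = j ∧ (i = 0 ∨ i = 3 ∨ i = 4) then 1 else 0)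
    (hPxx : ∀ i j : ℕ, i ≤ 4 → j ≤ 4 →
      r (Ppoly i xR * Ppoly j xR) = if i = j then 1 else 0)
    (hPyy : ∀ i j : ℕ, i ≤ 4 → j ≤ 4 →
      r (Ppoly i yR * Ppoly j yR) = if i = j then 1 else 0) :
    ∀ i j : ℕ, i + j ≤ 8 → r (mono i j) = tab i j :=
  residue_table_determined_general r hsymm hrec hPxy hPxx
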